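/- Let E be a module over L⁰ = L⁰(𝔉,ℝ) and (E, 𝒯) a topological L⁰-module (addition continuous and module multiplication L⁰ × E → E continuous with L⁰ carrying 𝒯_c). Then the following are equivalent: (1) the topology 𝒯 is induced by some family of L⁰-seminorms on E; (2) there exists a neighborhood base 𝒰 of 0 for 𝒯 such that every U ∈ 𝒰 is L⁰-convex, L⁰-absorbent and L⁰-balanced and has the relative countable concatenation property. -/

import Mathlib

noncomputable section

open MeasureTheory Set Pointwise Filter Topology

namespace PaperL0

variable {Ω : Type*} [MeasurableSpace Ω]

instance commRingL0 (μ : Measure Ω) : CommRing (Ω →ₘ[μ] ℝ) :=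
  { (inferInstance : AddCommGroup (Ω →ₘ[μ] ℝ)),
    (inferInstance : CommMonoid (Ω →ₘ[μ] ℝ)) with
    left_distrib := fun f g h => MeasureTheory.AEEqFun.toGerm_injective <| by
      simp [MeasureTheory.AEEqFun.mul_toGerm, MeasureTheory.AEEqFun.add_toGerm, mul_add]
    right_distrib := fun f g h => MeasureTheory.AEEqFun.toGerm_injective <| by
      simp [MeasureTheory.AEEqFun.mul_toGerm, MeasureTheory.AEEqFun.add_toGerm, add_mul]
    zero_mul := fun f => MeasureTheory.AEEqFun.toGerm_injective <| by
      simp [MeasureTheory.AEEqFun.mul_toGerm, MeasureTheory.AEEqFun.zero_toGerm]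
    mul_zero := fun f => MeasureTheory.AEEqFun.toGerm_injective <| by
      simp [MeasureTheory.AEEqFun.mul_toGerm, MeasureTheory.AEEqFun.zero_toGerm] }

variable (μ : Measure Ω)

/-- `L⁰₊`, the set of nonnegative elements of `L⁰`. -/
def Lpos : Set (Ω →ₘ[μ] ℝ) := {ξ | 0 ≤ ξ}

/-- `L⁰₊₊`, the set of elements of `L⁰` which are `> 0` a.e. on `Ω`. -/
def Lspos : Set (Ω →ₘ[μ] ℝ) := {ξ | ∀ᵐ ω ∂μ, 0 < ξ ω}

/-- The absolute value `|ξ|` of an element of `L⁰`. -/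
def aabs {μ : Measure Ω} (ξ : Ω →ₘ[μ] ℝ) : Ω →ₘ[μ] ℝ := ξ ⊔ -ξ

/-- `B_ε = {ξ ∈ L⁰ : |ξ| ≤ ε}`. -/
def ball (ε : Ω →ₘ[μ] ℝ) : Set (Ω →ₘ[μ] ℝ) := {ξ | aabs ξ ≤ ε}

open Classical in
/-- `Ĩ_A`, the equivalence class of the indicator function of a (measurable) set `A`. -/
def ind (A : Set Ω) : Ω →ₘ[μ] ℝ :=
  if h : MeasurableSet A then
    AEEqFun.mk (A.indicator fun _ => (1 : ℝ))
      ((measurable_const.indicator h).aestronglyMeasurable)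
  else 0

/-- A countable measurable partition of `Ω`. -/
def IsMeasPartition (A : ℕ → Set Ω) : Prop :=
  (∀ n, MeasurableSet (A n)) ∧ Pairwise (Function.onFun Disjoint A) ∧ (⋃ n, A n) = Set.univ

variable {E : Type*} [AddCommGroup E] [Module (Ω →ₘ[μ] ℝ) E]

/-- `L⁰`-convexity of a subset of an `L⁰`-module. -/
def IsL0Convex (U : Set E) : Prop :=
  ∀ x ∈ U, ∀ y ∈ U, ∀ ξ : Ω →ₘ[μ] ℝ, 0 ≤ ξ → ξ ≤ 1 → ξ • x + (1 - ξ) • y ∈ U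

/-- `L⁰`-absorbency of a subset of an `L⁰`-module. -/
def IsL0Absorbent (U : Set E) : Prop := ∀ x : E, ∃ ξ ∈ Lspos μ, x ∈ ξ • U

/-- `L⁰`-balancedness of a subset of an `L⁰`-module. -/
def IsL0Balanced (U : Set E) : Prop :=
  ∀ x ∈ U, ∀ ξ : Ω →ₘ[μ] ℝ, aabs ξ ≤ 1 → ξ • x ∈ U

/-- An `L⁰`-seminorm on an `L⁰`-module. -/
structure IsL0Seminorm (p : E → Ω →ₘ[μ] ℝ) : Prop where
  nonneg : ∀ x, 0 ≤ p x
  homog : ∀ (ξ : Ω →ₘ[μ] ℝ) (x : E), p (ξ • x) = aabs ξ * p x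
  triangle : ∀ x y, p (x + y) ≤ p x + p y

/-- The countable concatenation property for a subset of an `L⁰`-module. -/
def HasCCP (G : Set E) : Prop :=
  ∀ x : ℕ → E, (∀ n, x n ∈ G) → ∀ A : ℕ → Set Ω, IsMeasPartition A →
    (∃ y : E, ∀ n, ind μ (A n) • y = ind μ (A n) • x n) ∧
      ∀ y : E, (∀ n, ind μ (A n) • y = ind μ (A n) • x n) → y ∈ G

/-- The relative countable concatenation property for a subset of an `L⁰`-module. -/
def HasRelCCP (G : Set E) : Prop :=
  ∀ x : ℕ → E, (∀ n, x n ∈ G) → ∀ A : ℕ → Set Ω, IsMeasPartition A →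
    ∀ y : E, (∀ n, ind μ (A n) • y = ind μ (A n) • x n) → y ∈ G

/-- A `P`-atom of a measure. -/
def IsPAtom (A : Set Ω) : Prop :=
  MeasurableSet A ∧ 0 < μ A ∧ ∀ B, MeasurableSet B → B ⊆ A → μ B = 0 ∨ μ B = μ A

end PaperL0

open PaperL0

/-!
(1) ⇒ (2): the balls `{x | q x ≤ ε for q ∈ Qs}` (`Qs` finite, `ε ∈ L⁰₊₊`) form a base at `0`,
and each of them is L⁰-convex, balanced, absorbent and has the relative countable concatenation
property, all checked pointwise in `ω`.

(2) ⇒ (1): each `U` of the base has an L⁰-gauge `p_U x = ess.inf {ξ ∈ L⁰₊₊ | x ∈ ξ • U}`,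
an L⁰-seminorm with `ε • U ⊆ {p_U ≤ ε}` and `{p_U ≤ 1/2} ⊆ U`, so these seminorms induce the
topology. Convexity makes the set of admissible `ξ` closed under `⊓`, so minimising
`ξ ↦ ∫ arctan ξ dP` over it yields a decreasing sequence converging a.e. to its essential
infimum. That the infimum is almost attained, `x ∈ (p_U x + δ) • U`, is where the relative
countable concatenation property enters: on the pieces of a partition where the sequence is
within `δ` of its limit, `x` lies in `(p_U x + δ) • U` by balancedness, and these pieces glue.
-/

namespace PaperL0

variable {Ω : Type*} [MeasurableSpace Ω] {μ : Measure Ω}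

local notation "L⁰" => Ω →ₘ[μ] ℝ

section L0

theorem le_iff_ae_le {ξ η : L⁰} : ξ ≤ η ↔ ∀ᵐ ω ∂μ, ξ ω ≤ η ω := AEEqFun.coeFn_le.symm

theorem coeFn_aabs (ξ : L⁰) : ⇑(aabs ξ) =ᵐ[μ] fun ω => |ξ ω| := AEEqFun.coeFn_abs ξ

theorem coeFn_ind {A : Set Ω} (hA : MeasurableSet A) :
    ⇑(ind μ A) =ᵐ[μ] A.indicator fun _ => (1 : ℝ) := by
  rw [ind, dif_pos hA]
  exact AEEqFun.coeFn_mk _ _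

theorem ind_nonneg {A : Set Ω} (hA : MeasurableSet A) : 0 ≤ ind μ A := by
  rw [le_iff_ae_le]
  filter_upwards [coeFn_ind (μ := μ) hA, AEEqFun.coeFn_zero (μ := μ) (β := ℝ)] with ω h1 h2
  rw [h1, h2]
  exact Set.indicator_nonneg (fun _ _ => zero_le_one) ω

theorem ind_le_one {A : Set Ω} (hA : MeasurableSet A) : ind μ A ≤ 1 := by
  rw [le_iff_ae_le]
  filter_upwards [coeFn_ind (μ := μ) hA, AEEqFun.coeFn_one (μ := μ) (β := ℝ)] with ω h1 h2
  rw [h1, h2]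
  exact Set.indicator_le_self' (fun _ _ => zero_le_one) ω

theorem ind_mul_self {A : Set Ω} (hA : MeasurableSet A) : ind μ A * ind μ A = ind μ A := by
  refine AEEqFun.ext ?_
  filter_upwards [AEEqFun.coeFn_mul (ind μ A) (ind μ A), coeFn_ind (μ := μ) hA] with ω h1 h2
  by_cases h : ω ∈ A <;> simp [h1, h2, h]

theorem aabs_ind {A : Set Ω} (hA : MeasurableSet A) : aabs (ind μ A) = ind μ A := by
  refine AEEqFun.ext ?_
  filter_upwards [coeFn_aabs (ind μ A), coeFn_ind (μ := μ) hA] with ω h1 h2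
  by_cases h : ω ∈ A <;> simp [h1, h2, h]

/-- Pointwise inverse; on `{ξ = 0}` it is `0`, following `(0 : ℝ)⁻¹ = 0`. -/
def ainv (ξ : L⁰) : L⁰ := AEEqFun.compMeasurable Inv.inv measurable_inv ξ

theorem coeFn_ainv (ξ : L⁰) : ⇑(ainv ξ) =ᵐ[μ] fun ω => (ξ ω)⁻¹ :=
  AEEqFun.coeFn_compMeasurable _ _ _

theorem nonneg_of_mem_Lspos {ξ : L⁰} (hξ : ξ ∈ Lspos μ) : 0 ≤ ξ := by
  rw [le_iff_ae_le]
  filter_upwards [hξ, AEEqFun.coeFn_zero (μ := μ) (β := ℝ)] with ω h1 h2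
  simpa [h2] using h1.le

theorem mul_ainv_cancel {ξ : L⁰} (hξ : ξ ∈ Lspos μ) : ξ * ainv ξ = 1 := by
  refine AEEqFun.ext ?_
  filter_upwards [hξ, AEEqFun.coeFn_mul ξ (ainv ξ), coeFn_ainv ξ,
    AEEqFun.coeFn_one (μ := μ) (β := ℝ)] with ω h1 h2 h3 h4
  simp [h2, h3, h4, h1.ne']

theorem isUnit_of_mem_Lspos {ξ : L⁰} (hξ : ξ ∈ Lspos μ) : IsUnit ξ :=
  IsUnit.of_mul_eq_one _ (mul_ainv_cancel hξ)

theorem const_mem_Lspos {r : ℝ} (hr : 0 < r) : AEEqFun.const Ω r ∈ Lspos μ := by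
  filter_upwards [AEEqFun.coeFn_const (μ := μ) Ω r] with ω h
  simpa [h] using hr

theorem one_mem_Lspos : (1 : L⁰) ∈ Lspos μ := by
  filter_upwards [AEEqFun.coeFn_one (μ := μ) (β := ℝ)] with ω h
  simp [h]

theorem add_mem_Lspos {ξ η : L⁰} (hξ : 0 ≤ ξ) (hη : η ∈ Lspos μ) : ξ + η ∈ Lspos μ := by
  filter_upwards [le_iff_ae_le.1 hξ, hη, AEEqFun.coeFn_add ξ η,
    AEEqFun.coeFn_zero (μ := μ) (β := ℝ)] with ω h1 h2 h3 h4
  simp only [h3, Pi.add_apply]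
  simp only [h4, Pi.zero_apply] at h1
  linarith

theorem mul_mem_Lspos {ξ η : L⁰} (hξ : ξ ∈ Lspos μ) (hη : η ∈ Lspos μ) : ξ * η ∈ Lspos μ := by
  filter_upwards [hξ, hη, AEEqFun.coeFn_mul ξ η] with ω h1 h2 h3
  simpa [h3] using mul_pos h1 h2

theorem inf_mem_Lspos {ξ η : L⁰} (hξ : ξ ∈ Lspos μ) (hη : η ∈ Lspos μ) : ξ ⊓ η ∈ Lspos μ := by
  filter_upwards [hξ, hη, AEEqFun.coeFn_inf ξ η] with ω h1 h2 h3
  simpa [h3] using ⟨h1, h2⟩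

theorem le_of_forall_le_add_mul {ξ η c : L⁰} (h : ∀ δ ∈ Lspos μ, ξ ≤ η + c * δ) : ξ ≤ η := by
  have hn : ∀ n : ℕ, ∀ᵐ ω ∂μ, ξ ω ≤ η ω + c ω * (1 / (n + 1)) := fun n => by
    filter_upwards [le_iff_ae_le.1 (h _ (const_mem_Lspos (r := 1 / (n + 1)) Nat.one_div_pos_of_nat)),
      AEEqFun.coeFn_add η (c * AEEqFun.const Ω (1 / (n + 1 : ℝ))),
      AEEqFun.coeFn_mul c (AEEqFun.const Ω (1 / (n + 1 : ℝ))),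
      AEEqFun.coeFn_const (μ := μ) Ω (1 / (n + 1 : ℝ))] with ω h1 h2 h3 h4
    rwa [h2, Pi.add_apply, h3, Pi.mul_apply, h4] at h1
  rw [le_iff_ae_le]
  filter_upwards [ae_all_iff.2 hn] with ω hω
  have hlim : Tendsto (fun n : ℕ => η ω + c ω * (1 / (n + 1))) atTop (𝓝 (η ω)) := by
    simpa using (tendsto_const_nhds (x := η ω)).add
      ((tendsto_const_nhds (x := c ω)).mul tendsto_one_div_add_atTop_nhds_zero_nat)
  exact ge_of_tendsto' hlim hω

theorem le_of_isMeasPartition {A : ℕ → Set Ω} (hA : IsMeasPartition A) {ξ ε : L⁰} {ξs : ℕ → L⁰}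
    (heq : ∀ n, ind μ (A n) * ξ = ind μ (A n) * ξs n) (hle : ∀ n, ξs n ≤ ε) : ξ ≤ ε := by
  have hn : ∀ n, ∀ᵐ ω ∂μ, ω ∈ A n → ξ ω ≤ ε ω := fun n => by
    filter_upwards [AEEqFun.coeFn_mul (ind μ (A n)) ξ, AEEqFun.coeFn_mul (ind μ (A n)) (ξs n),
      coeFn_ind (μ := μ) (hA.1 n), le_iff_ae_le.1 (hle n)] with ω h1 h2 h3 h4 hω
    have := congrArg (fun f : L⁰ => f ω) (heq n)
    simp only [h1, h2, Pi.mul_apply, h3, Set.indicator_of_mem hω, one_mul] at this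
    exact this ▸ h4
  rw [le_iff_ae_le]
  filter_upwards [ae_all_iff.2 hn] with ω hω
  obtain ⟨n, hn⟩ := Set.mem_iUnion.1 (hA.2.2.symm ▸ Set.mem_univ ω)
  exact hω n hn

theorem exists_tendsto_of_antitone {ζ : ℕ → L⁰} (hζ : Antitone ζ) (hnn : ∀ n, 0 ≤ ζ n) :
    ∃ ρ : L⁰, 0 ≤ ρ ∧ ∀ᵐ ω ∂μ, Tendsto (fun n => ζ n ω) atTop (𝓝 (ρ ω)) := by
  have hζω : ∀ᵐ ω ∂μ, Antitone (fun n => ζ n ω) ∧ ∀ n, 0 ≤ ζ n ω := by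
    filter_upwards [ae_all_iff.2 fun n => le_iff_ae_le.1 (hζ (Nat.le_succ n)),
      ae_all_iff.2 fun n => le_iff_ae_le.1 (hnn n), AEEqFun.coeFn_zero (μ := μ) (β := ℝ)]
      with ω h1 h2 h0
    exact ⟨antitone_nat_of_succ_le h1, fun n => by simpa [h0] using h2 n⟩
  have hm : Measurable fun ω => ⨅ n, ζ n ω := Measurable.iInf fun n => (ζ n).measurable
  refine ⟨AEEqFun.mk _ hm.aestronglyMeasurable, ?_, ?_⟩
  · rw [le_iff_ae_le]
    filter_upwards [hζω, AEEqFun.coeFn_mk _ hm.aestronglyMeasurable,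
      AEEqFun.coeFn_zero (μ := μ) (β := ℝ)] with ω ⟨_, h⟩ c c₀
    rw [c, c₀]
    exact le_ciInf h
  · filter_upwards [hζω, AEEqFun.coeFn_mk _ hm.aestronglyMeasurable] with ω ⟨h1, h2⟩ c
    rw [c]
    exact tendsto_atTop_ciInf h1 ⟨0, by rintro _ ⟨n, rfl⟩; exact h2 n⟩

theorem exists_isMeasPartition_ae_subset {B : ℕ → Set Ω} (hB : ∀ n, MeasurableSet (B n))
    (hcover : ∀ᵐ ω ∂μ, ∃ n, ω ∈ B n) :
    ∃ A : ℕ → Set Ω, IsMeasPartition A ∧ ∀ n, ∀ᵐ ω ∂μ, ω ∈ A n → ω ∈ B n := by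
  -- `(⋃ k, B k)ᶜ` is null, so adding it to every `B n` is harmless; then disjointify
  set B' : ℕ → Set Ω := fun n => B n ∪ (⋃ k, B k)ᶜ
  refine ⟨disjointed B', ⟨MeasurableSet.disjointed fun n =>
    (hB n).union (MeasurableSet.iUnion hB).compl, disjoint_disjointed B', ?_⟩, fun n => ?_⟩
  · rw [iUnion_disjointed, Set.eq_univ_iff_forall]
    intro ω
    by_cases h : ω ∈ ⋃ k, B k
    · obtain ⟨k, hk⟩ := Set.mem_iUnion.1 h
      exact Set.mem_iUnion.2 ⟨k, Or.inl hk⟩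
    · exact Set.mem_iUnion.2 ⟨0, Or.inr h⟩
  · filter_upwards [hcover] with ω ⟨k, hk⟩ hω
    exact (disjointed_subset B' n hω).resolve_right (not_not.2 (Set.mem_iUnion.2 ⟨k, hk⟩))

end L0

section EssInf

open Real

variable [IsFiniteMeasure μ]

def arctanMean (ξ : L⁰) : ℝ := ∫ ω, arctan (ξ ω) ∂μ

theorem norm_arctan_le (t : ℝ) : ‖arctan t‖ ≤ π / 2 :=
  abs_le.2 ⟨(neg_pi_div_two_lt_arctan t).le, (arctan_lt_pi_div_two t).le⟩

theorem integrable_arctan (ξ : L⁰) : Integrable (fun ω => arctan (ξ ω)) μ :=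
  .of_bound (continuous_arctan.comp_aestronglyMeasurable ξ.aestronglyMeasurable) _
    (ae_of_all _ fun ω => norm_arctan_le (ξ ω))

theorem arctanMean_mono {ξ η : L⁰} (h : ξ ≤ η) : arctanMean ξ ≤ arctanMean η :=
  integral_mono_ae (integrable_arctan ξ) (integrable_arctan η)
    ((le_iff_ae_le.1 h).mono fun _ hω => arctan_mono hω)

theorem eq_of_le_of_arctanMean_le {ξ η : L⁰} (h : ξ ≤ η) (hm : arctanMean η ≤ arctanMean ξ) :
    ξ = η := by
  have := (integral_eq_iff_of_ae_le (integrable_arctan ξ) (integrable_arctan η)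
    ((le_iff_ae_le.1 h).mono fun _ hω => arctan_mono hω)).1
    (le_antisymm (arctanMean_mono h) hm)
  exact AEEqFun.ext (this.mono fun _ hω => arctan_injective hω)

theorem bddBelow_range_arctanMean : BddBelow (Set.range (arctanMean (μ := μ))) := by
  refine ⟨-(π / 2 * μ.real Set.univ), ?_⟩
  rintro _ ⟨ξ, rfl⟩
  have := norm_integral_le_of_norm_le_const (μ := μ) (ae_of_all _ fun ω => norm_arctan_le (ξ ω))
  exact (neg_le_neg this).trans (neg_abs_le _)

theorem tendsto_arctanMean {ζ : ℕ → L⁰} {ρ : L⁰}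
    (h : ∀ᵐ ω ∂μ, Tendsto (fun n => ζ n ω) atTop (𝓝 (ρ ω))) :
    Tendsto (fun n => arctanMean (ζ n)) atTop (𝓝 (arctanMean ρ)) :=
  tendsto_integral_of_dominated_convergence (fun _ => π / 2)
    (fun n => continuous_arctan.comp_aestronglyMeasurable (ζ n).aestronglyMeasurable)
    (integrable_const _) (fun _ => ae_of_all _ fun _ => norm_arctan_le _)
    (h.mono fun _ hω => (continuous_arctan.tendsto _).comp hω)

variable {S : Set (Ω →ₘ[μ] ℝ)}

theorem exists_antitone_tendsto_sInf_arctanMean (hne : S.Nonempty)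
    (hinf : ∀ ξ ∈ S, ∀ η ∈ S, ξ ⊓ η ∈ S) :
    ∃ ζ : ℕ → L⁰, (∀ n, ζ n ∈ S) ∧ Antitone ζ ∧
      Tendsto (fun n => arctanMean (ζ n)) atTop (𝓝 (sInf (arctanMean '' S))) := by
  have hbdd := bddBelow_range_arctanMean.mono (Set.image_subset_range arctanMean S)
  obtain ⟨u, -, hu, huS⟩ := exists_seq_tendsto_sInf (hne.image _) hbdd
  choose ξ hξS hξu using huS
  refine ⟨fun n => (Finset.range (n + 1)).inf' ⟨n, Finset.self_mem_range_succ n⟩ ξ,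
    fun n => Finset.inf'_induction _ _ hinf fun i _ => hξS i,
    fun m n hmn => Finset.inf'_mono _ (Finset.range_subset_range.2 (by omega)) _, ?_⟩
  refine tendsto_of_tendsto_of_tendsto_of_le_of_le tendsto_const_nhds hu
    (fun n => csInf_le hbdd ⟨_, Finset.inf'_induction _ _ hinf (fun i _ => hξS i), rfl⟩)
    (fun n => ?_)
  rw [← hξu n]
  exact arctanMean_mono (Finset.inf'_le _ (Finset.self_mem_range_succ n))

theorem exists_seq_tendsto_essInf (hne : S.Nonempty) (hinf : ∀ ξ ∈ S, ∀ η ∈ S, ξ ⊓ η ∈ S)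
    (hnn : ∀ ξ ∈ S, 0 ≤ ξ) :
    ∃ (ζ : ℕ → L⁰) (ρ : L⁰), (∀ n, ζ n ∈ S) ∧ 0 ≤ ρ ∧ (∀ ξ ∈ S, ρ ≤ ξ) ∧
      ∀ᵐ ω ∂μ, Tendsto (fun n => ζ n ω) atTop (𝓝 (ρ ω)) := by
  obtain ⟨ζ, hζS, hζ, hlim⟩ := exists_antitone_tendsto_sInf_arctanMean hne hinf
  obtain ⟨ρ, hρ0, hρ⟩ := exists_tendsto_of_antitone hζ fun n => hnn _ (hζS n)
  have hmean : arctanMean ρ = sInf (arctanMean '' S) :=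
    tendsto_nhds_unique (tendsto_arctanMean hρ) hlim
  refine ⟨ζ, ρ, hζS, hρ0, fun ξ hξ => ?_, hρ⟩
  -- `ζ n ⊓ ξ ∈ S` decreases to `ρ ⊓ ξ`, so `ρ ⊓ ξ` has mean at least that of `ρ`
  have hlim' : ∀ᵐ ω ∂μ, Tendsto (fun n => (ζ n ⊓ ξ) ω) atTop (𝓝 ((ρ ⊓ ξ) ω)) := by
    filter_upwards [hρ, ae_all_iff.2 fun n => AEEqFun.coeFn_inf (ζ n) ξ,
      AEEqFun.coeFn_inf ρ ξ] with ω h c c'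
    simp only [c, c']
    exact h.inf_nhds tendsto_const_nhds
  have hbdd := bddBelow_range_arctanMean.mono (Set.image_subset_range arctanMean S)
  have hge : arctanMean ρ ≤ arctanMean (ρ ⊓ ξ) :=
    hmean ▸ ge_of_tendsto (tendsto_arctanMean hlim') (Eventually.of_forall fun n =>
      csInf_le hbdd ⟨_, hinf _ (hζS n) _ hξ, rfl⟩)
  exact inf_eq_left.1 (eq_of_le_of_arctanMean_le inf_le_left hge)

end EssInf

theorem preimage_add_left_mem_nhds_zero {G : Type*} [AddGroup G] [TopologicalSpace G]
    [ContinuousAdd G] (y : G) (V : Set G) : (y + ·) ⁻¹' V ∈ 𝓝 0 ↔ V ∈ 𝓝 y := by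
  have h : map (y + ·) (𝓝 0) = 𝓝 y := by simpa using (Homeomorph.addLeft y).map_nhds_eq 0
  rw [← h, mem_map]

variable {E : Type*} [AddCommGroup E]

def seminormBall (Qs : Set (E → L⁰)) (ε : L⁰) : Set E := {x | ∀ q ∈ Qs, q x ≤ ε}

section InducedTopology

variable [TopologicalSpace E]

def IsInducedBySeminorms (Ps : Set (E → L⁰)) : Prop :=
  ∀ V : Set E, IsOpen V ↔ ∀ y ∈ V, ∃ Qs : Set (E → L⁰), Qs.Finite ∧ Qs ⊆ Ps ∧
    ∃ ε ∈ Lspos μ, seminormBall Qs ε ⊆ (y + ·) ⁻¹' V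

def seminormBalls (Ps : Set (E → L⁰)) : Set (Set E) :=
  {U | ∃ Qs : Set (E → L⁰), Qs.Finite ∧ Qs ⊆ Ps ∧ ∃ ε ∈ Lspos μ, U = seminormBall Qs ε}

variable {Ps : Set (E → Ω →ₘ[μ] ℝ)}

theorem isInducedBySeminorms_of_forall [ContinuousAdd E]
    (hball : ∀ q ∈ Ps, ∀ ε ∈ Lspos μ, {x | q x ≤ ε} ∈ 𝓝 (0 : E))
    (hsmall : ∀ N ∈ 𝓝 (0 : E), ∃ q ∈ Ps, ∃ ε ∈ Lspos μ, {x | q x ≤ ε} ⊆ N) :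
    IsInducedBySeminorms Ps := by
  intro V
  rw [isOpen_iff_mem_nhds]
  refine forall₂_congr fun y _ => ?_
  rw [← preimage_add_left_mem_nhds_zero]
  constructor
  · intro hV
    obtain ⟨q, hq, ε, hε, hsub⟩ := hsmall _ hV
    exact ⟨{q}, Set.finite_singleton q, Set.singleton_subset_iff.2 hq, ε, hε,
      fun u hu => hsub (hu q rfl)⟩
  · rintro ⟨Qs, hfin, hQs, ε, hε, hsub⟩
    refine mem_of_superset ((biInter_mem hfin).2 fun q hq => hball q (hQs hq) ε hε) ?_
    exact fun u hu => hsub fun q hq => Set.mem_iInter₂.1 hu q hq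

end InducedTopology

variable [Module (Ω →ₘ[μ] ℝ) E]

theorem smul_ainv_smul {ξ : L⁰} (hξ : ξ ∈ Lspos μ) (x : E) : ξ • ainv ξ • x = x := by
  rw [smul_smul, mul_ainv_cancel hξ, one_smul]

theorem ainv_smul_smul {ξ : L⁰} (hξ : ξ ∈ Lspos μ) (x : E) : ainv ξ • ξ • x = x := by
  rw [smul_comm, smul_ainv_smul hξ]

namespace IsL0Seminorm

variable {p : E → Ω →ₘ[μ] ℝ}

theorem map_zero (hp : IsL0Seminorm μ p) : p 0 = 0 := by
  simpa [aabs] using hp.homog 0 0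

theorem map_ind_smul (hp : IsL0Seminorm μ p) {A : Set Ω} (hA : MeasurableSet A) (x : E) :
    p (ind μ A • x) = ind μ A * p x := by
  rw [hp.homog, aabs_ind hA]

theorem of_smul_le (hnn : ∀ x, 0 ≤ p x) (htri : ∀ x y, p (x + y) ≤ p x + p y)
    (hsmul : ∀ (ξ : L⁰) x, p (ξ • x) ≤ aabs ξ * p x) : IsL0Seminorm μ p := by
  refine ⟨hnn, fun ξ x => le_antisymm (hsmul ξ x) ?_, htri⟩
  -- `ξ * ainv ξ` is the indicator of `{ξ ≠ 0}`; split `x` along it.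
  have hsplit := htri ((ξ * ainv ξ) • x) ((1 - ξ * ainv ξ) • x)
  rw [← add_smul, add_sub_cancel, one_smul] at hsplit
  have hoff := hsmul (1 - ξ * ainv ξ) x
  have hon := hsmul (ainv ξ) (ξ • x)
  rw [smul_smul, mul_comm] at hon
  rw [le_iff_ae_le] at hsplit hoff hon ⊢
  filter_upwards [hsplit, hoff, hon, le_iff_ae_le.1 (hnn (ξ • x)),
    AEEqFun.coeFn_add (p ((ξ * ainv ξ) • x)) (p ((1 - ξ * ainv ξ) • x)),
    AEEqFun.coeFn_mul (aabs (1 - ξ * ainv ξ)) (p x),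
    AEEqFun.coeFn_mul (aabs (ainv ξ)) (p (ξ • x)), AEEqFun.coeFn_mul (aabs ξ) (p x),
    coeFn_aabs (1 - ξ * ainv ξ), coeFn_aabs (ainv ξ), coeFn_aabs ξ,
    AEEqFun.coeFn_sub 1 (ξ * ainv ξ), AEEqFun.coeFn_one (μ := μ) (β := ℝ),
    AEEqFun.coeFn_mul ξ (ainv ξ), coeFn_ainv ξ, AEEqFun.coeFn_zero (μ := μ) (β := ℝ)]
    with ω hsplit hoff hon hnn c₁ c₂ c₃ c₄ c₅ c₆ c₇ c₈ c₉ c₁₀ c₁₁ c₁₂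
  rw [c₁, Pi.add_apply] at hsplit
  rw [c₂, Pi.mul_apply, c₅, c₈, Pi.sub_apply, c₉, c₁₀, Pi.mul_apply, c₁₁] at hoff
  rw [c₃, Pi.mul_apply, c₆, c₁₁] at hon
  rw [c₄, Pi.mul_apply, c₇]
  rw [c₁₂] at hnn
  rcases eq_or_ne (ξ ω) 0 with h0 | h0
  · simpa [h0] using hnn
  · rw [Pi.one_apply, mul_inv_cancel₀ h0, sub_self, abs_zero, zero_mul] at hoff
    calc |ξ ω| * p x ω ≤ |ξ ω| * (|(ξ ω)⁻¹| * p (ξ • x) ω) := by gcongr; linarith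
      _ = p (ξ • x) ω := by rw [abs_inv, ← mul_assoc, mul_inv_cancel₀ (abs_ne_zero.2 h0), one_mul]

end IsL0Seminorm

section SeminormBall

variable {Qs : Set (E → Ω →ₘ[μ] ℝ)} {ε : Ω →ₘ[μ] ℝ}

theorem isL0Convex_seminormBall (hQs : ∀ q ∈ Qs, IsL0Seminorm μ q) :
    IsL0Convex μ (seminormBall Qs ε) := by
  intro x hx y hy ξ h0 h1 q hq
  have htri := (hQs q hq).triangle (ξ • x) ((1 - ξ) • y)
  rw [(hQs q hq).homog, (hQs q hq).homog] at htri
  rw [le_iff_ae_le] at h0 h1 htri ⊢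
  filter_upwards [h0, h1, htri, le_iff_ae_le.1 (hx q hq), le_iff_ae_le.1 (hy q hq),
    le_iff_ae_le.1 ((hQs q hq).nonneg x), le_iff_ae_le.1 ((hQs q hq).nonneg y),
    AEEqFun.coeFn_add (aabs ξ * q x) (aabs (1 - ξ) * q y), AEEqFun.coeFn_mul (aabs ξ) (q x),
    AEEqFun.coeFn_mul (aabs (1 - ξ)) (q y), coeFn_aabs ξ, coeFn_aabs (1 - ξ),
    AEEqFun.coeFn_sub 1 ξ, AEEqFun.coeFn_one (μ := μ) (β := ℝ),
    AEEqFun.coeFn_zero (μ := μ) (β := ℝ)]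
    with ω h0 h1 htri hx hy hnx hny c₁ c₂ c₃ c₄ c₅ c₆ c₇ c₈
  rw [c₁, Pi.add_apply, c₂, c₃, Pi.mul_apply, Pi.mul_apply, c₄, c₅, c₆, Pi.sub_apply, c₇,
    Pi.one_apply] at htri
  rw [c₈, Pi.zero_apply] at h0 hnx hny
  rw [c₇, Pi.one_apply] at h1
  rw [abs_of_nonneg h0, abs_of_nonneg (sub_nonneg.2 h1)] at htri
  nlinarith

theorem isL0Balanced_seminormBall (hQs : ∀ q ∈ Qs, IsL0Seminorm μ q) :
    IsL0Balanced μ (seminormBall Qs ε) := by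
  intro x hx ξ hξ q hq
  rw [(hQs q hq).homog, le_iff_ae_le]
  filter_upwards [le_iff_ae_le.1 hξ, le_iff_ae_le.1 (hx q hq),
    le_iff_ae_le.1 ((hQs q hq).nonneg x), AEEqFun.coeFn_mul (aabs ξ) (q x), coeFn_aabs ξ,
    AEEqFun.coeFn_one (μ := μ) (β := ℝ), AEEqFun.coeFn_zero (μ := μ) (β := ℝ)]
    with ω hξ hx hnx c₁ c₂ c₃ c₄
  rw [c₂, c₃, Pi.one_apply] at hξ
  rw [c₄, Pi.zero_apply] at hnx
  rw [c₁, Pi.mul_apply, c₂]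
  exact (mul_le_of_le_one_left hnx hξ).trans hx

theorem isL0Absorbent_seminormBall (hQs : ∀ q ∈ Qs, IsL0Seminorm μ q) (hfin : Qs.Finite)
    (hε : ε ∈ Lspos μ) : IsL0Absorbent μ (seminormBall Qs ε) := by
  intro x
  obtain ⟨S, hS⟩ := (hfin.image fun q => q x).bddAbove
  have hξ : ∀ᵐ ω ∂μ, (S * ainv ε ⊔ 1) ω = max (S ω * (ε ω)⁻¹) 1 := by
    filter_upwards [AEEqFun.coeFn_sup (S * ainv ε) 1, AEEqFun.coeFn_mul S (ainv ε),
      coeFn_ainv ε, AEEqFun.coeFn_one (μ := μ) (β := ℝ)] with ω c₁ c₂ c₃ c₄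
    rw [c₁, c₂, Pi.mul_apply, c₃, c₄, Pi.one_apply]
  have hξpos : S * ainv ε ⊔ 1 ∈ Lspos μ := by
    filter_upwards [hξ] with ω h
    exact h ▸ lt_max_of_lt_right one_pos
  refine ⟨_, hξpos, ainv (S * ainv ε ⊔ 1) • x, fun q hq => ?_, smul_ainv_smul hξpos x⟩
  rw [(hQs q hq).homog, le_iff_ae_le]
  filter_upwards [hξ, hε, le_iff_ae_le.1 (hS (Set.mem_image_of_mem _ hq)),
    le_iff_ae_le.1 ((hQs q hq).nonneg x), AEEqFun.coeFn_mul (aabs (ainv (S * ainv ε ⊔ 1))) (q x),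
    coeFn_aabs (ainv (S * ainv ε ⊔ 1)), coeFn_ainv (S * ainv ε ⊔ 1),
    AEEqFun.coeFn_zero (μ := μ) (β := ℝ)] with ω hξ hε hS hnx c₁ c₂ c₃ c₄
  rw [c₄, Pi.zero_apply] at hnx
  have hmax : 0 < max (S ω * (ε ω)⁻¹) 1 := lt_max_of_lt_right one_pos
  rw [c₁, Pi.mul_apply, c₂, c₃, hξ, abs_inv, abs_of_pos hmax, inv_mul_le_iff₀ hmax]
  calc q x ω ≤ S ω * (ε ω)⁻¹ * ε ω := by rw [inv_mul_cancel_right₀ hε.ne']; exact hS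
    _ ≤ max (S ω * (ε ω)⁻¹) 1 * ε ω := by gcongr; exact le_max_left _ _

theorem hasRelCCP_seminormBall (hQs : ∀ q ∈ Qs, IsL0Seminorm μ q) :
    HasRelCCP μ (seminormBall Qs ε) := by
  intro x hx A hA y hy q hq
  refine le_of_isMeasPartition hA (fun n => ?_) (fun n => hx n q hq)
  rw [← (hQs q hq).map_ind_smul (hA.1 n), hy n, (hQs q hq).map_ind_smul (hA.1 n)]

end SeminormBall

section Topology

variable [TopologicalSpace E] {Ps : Set (E → Ω →ₘ[μ] ℝ)}

theorem seminormBall_mem_nhds_zero (hPs : ∀ p ∈ Ps, IsL0Seminorm μ p)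
    (hT : IsInducedBySeminorms Ps) {Qs : Set (E → L⁰)} (hfin : Qs.Finite) (hQs : Qs ⊆ Ps)
    {ε : L⁰} (hε : ε ∈ Lspos μ) : seminormBall Qs ε ∈ 𝓝 (0 : E) := by
  -- the points of the ball with a uniform margin below `ε` form an open set
  set W : Set E := {y | ∃ δ ∈ Lspos μ, ∀ q ∈ Qs, q y + δ ≤ ε}
  have hhalf {δ : L⁰} (hδ : δ ∈ Lspos μ) : AEEqFun.const Ω (1 / 2) * δ ∈ Lspos μ :=
    mul_mem_Lspos (const_mem_Lspos one_half_pos) hδ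
  have hW : IsOpen W := by
    refine (hT W).2 fun y ⟨δ, hδ, hy⟩ => ⟨Qs, hfin, hQs, _, hhalf hδ, fun u hu =>
      ⟨_, hhalf hδ, fun q hq => ?_⟩⟩
    have htri := (hPs q (hQs hq)).triangle y u
    rw [le_iff_ae_le] at htri ⊢
    filter_upwards [htri, le_iff_ae_le.1 (hy q hq), le_iff_ae_le.1 (hu q hq),
      AEEqFun.coeFn_add (q (y + u)) (AEEqFun.const Ω (1 / 2) * δ),
      AEEqFun.coeFn_add (q y) (q u), AEEqFun.coeFn_add (q y) δ,
      AEEqFun.coeFn_mul (AEEqFun.const Ω (1 / 2)) δ,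
      AEEqFun.coeFn_const (μ := μ) Ω (1 / 2 : ℝ)] with ω htri hy hu c₁ c₂ c₃ c₄ c₅
    rw [c₂, Pi.add_apply] at htri
    rw [c₃, Pi.add_apply] at hy
    rw [c₄, Pi.mul_apply, c₅, Function.const_apply] at hu
    rw [c₁, Pi.add_apply, c₄, Pi.mul_apply, c₅, Function.const_apply]
    linarith
  have h0W : (0 : E) ∈ W := ⟨ε, hε, fun q hq => by rw [(hPs q (hQs hq)).map_zero, zero_add]⟩
  have hWball : W ⊆ seminormBall Qs ε := by
    rintro y ⟨δ, hδ, hy⟩ q hq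
    rw [le_iff_ae_le]
    filter_upwards [le_iff_ae_le.1 (hy q hq), hδ, AEEqFun.coeFn_add (q y) δ] with ω hy hδ c
    rw [c, Pi.add_apply] at hy
    linarith
  exact mem_of_superset (hW.mem_nhds h0W) hWball

theorem hasBasis_nhds_zero_seminormBalls (hPs : ∀ p ∈ Ps, IsL0Seminorm μ p)
    (hT : IsInducedBySeminorms Ps) : (𝓝 (0 : E)).HasBasis (· ∈ seminormBalls Ps) id := by
  refine ⟨fun N => ⟨fun hN => ?_, ?_⟩⟩
  · obtain ⟨V, hVN, hV, h0V⟩ := mem_nhds_iff.1 hN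
    obtain ⟨Qs, hfin, hQs, ε, hε, hball⟩ := (hT V).1 hV 0 h0V
    exact ⟨_, ⟨Qs, hfin, hQs, ε, hε, rfl⟩, fun u hu => hVN (by simpa using hball hu)⟩
  · rintro ⟨_, ⟨Qs, hfin, hQs, ε, hε, rfl⟩, hN⟩
    exact mem_of_superset (seminormBall_mem_nhds_zero hPs hT hfin hQs hε) hN

theorem smul_mem_nhds_zero [ContinuousConstSMul L⁰ E] {U : Set E} (hU : U ∈ 𝓝 0) {ε : L⁰}
    (hε : ε ∈ Lspos μ) : ε • U ∈ 𝓝 (0 : E) := by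
  simpa using (isUnit_of_mem_Lspos hε).smul_mem_nhds_smul_iff.2 hU

end Topology

section Absorption

variable {U : Set E}

theorem IsL0Balanced.mem_smul_of_aabs_le (hU : IsL0Balanced μ U) {x : E} {ξ ζ : L⁰}
    (hx : x ∈ ξ • U) (hζ : ζ ∈ Lspos μ) (hle : aabs ξ ≤ ζ) : x ∈ ζ • U := by
  obtain ⟨u, hu, rfl⟩ := hx
  refine ⟨(ainv ζ * ξ) • u, hU u hu _ ?_, by
    show ζ • _ = ξ • u
    rw [← smul_smul, smul_ainv_smul hζ]⟩
  rw [le_iff_ae_le] at hle ⊢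
  filter_upwards [hle, hζ, coeFn_aabs (ainv ζ * ξ), AEEqFun.coeFn_mul (ainv ζ) ξ, coeFn_ainv ζ,
    coeFn_aabs ξ, AEEqFun.coeFn_one (μ := μ) (β := ℝ)] with ω hle hζ c₁ c₂ c₃ c₄ c₅
  rw [c₄] at hle
  rw [c₁, c₂, Pi.mul_apply, c₃, c₅, Pi.one_apply, abs_mul, abs_inv, abs_of_pos hζ,
    inv_mul_le_iff₀ hζ, mul_one]
  exact hle

theorem IsL0Convex.add_mem_smul (hU : IsL0Convex μ U) {x y : E} {a b : L⁰} (ha : a ∈ Lspos μ)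
    (hb : b ∈ Lspos μ) (hx : x ∈ a • U) (hy : y ∈ b • U) : x + y ∈ (a + b) • U := by
  obtain ⟨u, hu, rfl⟩ := hx
  obtain ⟨v, hv, rfl⟩ := hy
  have hab := mul_ainv_cancel (add_mem_Lspos (nonneg_of_mem_Lspos ha) hb)
  have hcoef : ∀ᵐ ω ∂μ, 0 ≤ (a * ainv (a + b)) ω ∧ (a * ainv (a + b)) ω ≤ 1 := by
    filter_upwards [ha, hb, AEEqFun.coeFn_mul a (ainv (a + b)), coeFn_ainv (a + b),
      AEEqFun.coeFn_add a b] with ω ha hb c₁ c₂ c₃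
    rw [c₁, Pi.mul_apply, c₂, c₃, Pi.add_apply, ← div_eq_mul_inv]
    exact ⟨by positivity, (div_le_one (by positivity)).2 (by linarith)⟩
  refine ⟨(a * ainv (a + b)) • u + (1 - a * ainv (a + b)) • v, hU u hu v hv _ ?_ ?_, ?_⟩
  · rw [le_iff_ae_le]
    filter_upwards [hcoef, AEEqFun.coeFn_zero (μ := μ) (β := ℝ)] with ω h c
    simpa [c] using h.1
  · rw [le_iff_ae_le]
    filter_upwards [hcoef, AEEqFun.coeFn_one (μ := μ) (β := ℝ)] with ω h c
    simpa [c] using h.2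
  · beta_reduce
    rw [smul_add, smul_smul, smul_smul]
    congr 2
    · rw [mul_left_comm, hab, mul_one]
    · linear_combination (-a) * hab

theorem IsL0Convex.mem_smul_inf (hU : IsL0Convex μ U) {x : E} {ξ η : L⁰} (hξ : x ∈ ξ • U)
    (hη : x ∈ η • U) : x ∈ (ξ ⊓ η) • U := by
  obtain ⟨u, hu, hxu⟩ := Set.mem_smul_set.1 hξ
  obtain ⟨v, hv, hxv⟩ := Set.mem_smul_set.1 hη
  have hA : MeasurableSet {ω | ξ ω ≤ η ω} := measurableSet_le ξ.measurable η.measurable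
  set e := ind μ {ω | ξ ω ≤ η ω}
  have he : ∀ᵐ ω ∂μ, (ξ ⊓ η) ω * e ω = e ω * ξ ω ∧ (ξ ⊓ η) ω * (1 - e ω) = (1 - e ω) * η ω := by
    filter_upwards [AEEqFun.coeFn_inf ξ η, coeFn_ind (μ := μ) hA] with ω c₁ c₂
    rw [c₁, c₂]
    by_cases h : ξ ω ≤ η ω
    · simp [h]
    · simp [h, (not_le.1 h).le]
  have h₁ : (ξ ⊓ η) * e = e * ξ := by
    refine AEEqFun.ext ?_
    filter_upwards [he, AEEqFun.coeFn_mul (ξ ⊓ η) e, AEEqFun.coeFn_mul e ξ] with ω h c₁ c₂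
    rw [c₁, c₂]
    exact h.1
  have h₂ : (ξ ⊓ η) * (1 - e) = (1 - e) * η := by
    refine AEEqFun.ext ?_
    filter_upwards [he, AEEqFun.coeFn_mul (ξ ⊓ η) (1 - e), AEEqFun.coeFn_mul (1 - e) η,
      AEEqFun.coeFn_sub 1 e, AEEqFun.coeFn_one (μ := μ) (β := ℝ)] with ω h c₁ c₂ c₃ c₄
    rw [c₁, c₂, Pi.mul_apply, Pi.mul_apply, c₃, Pi.sub_apply, c₄, Pi.one_apply]
    exact h.2
  refine ⟨e • u + (1 - e) • v, hU u hu v hv e (ind_nonneg hA) (ind_le_one hA), ?_⟩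
  beta_reduce
  rw [smul_add, smul_smul, smul_smul, h₁, h₂, mul_smul, mul_smul, hxu, hxv, ← add_smul,
    add_sub_cancel, one_smul]

theorem HasRelCCP.mem_smul_of_isMeasPartition (hU : HasRelCCP μ U) (hbal : IsL0Balanced μ U)
    {A : ℕ → Set Ω} (hA : IsMeasPartition A) {ξ : ℕ → L⁰} {η : L⁰} (hη : η ∈ Lspos μ) {x : E}
    (hx : ∀ n, x ∈ ξ n • U) (hle : ∀ n, ∀ᵐ ω ∂μ, ω ∈ A n → |ξ n ω| ≤ η ω) : x ∈ η • U := by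
  have hloc : ∀ n, ind μ (A n) • x ∈ η • U := fun n => by
    obtain ⟨u, hu, rfl⟩ := hx n
    refine hbal.mem_smul_of_aabs_le ⟨u, hu, (smul_smul _ _ _).symm⟩ hη ?_
    rw [le_iff_ae_le]
    filter_upwards [hle n, coeFn_aabs (ind μ (A n) * ξ n),
      AEEqFun.coeFn_mul (ind μ (A n)) (ξ n), coeFn_ind (μ := μ) (hA.1 n), hη] with ω h c₁ c₂ c₃ hη
    rw [c₁, c₂, Pi.mul_apply, c₃]
    by_cases hω : ω ∈ A n
    · simpa [hω] using h hω
    · simpa [hω] using hη.le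
  choose w hwU hw using hloc
  -- `ainv η • x` is glued from the pieces `w n`
  have hpiece : ∀ n, ind μ (A n) • ainv η • x = w n := fun n => by
    rw [smul_comm, ← hw n, ainv_smul_smul hη]
  refine ⟨ainv η • x, hU w hwU A hA _ fun n => ?_, smul_ainv_smul hη x⟩
  calc ind μ (A n) • ainv η • x = ind μ (A n) • ind μ (A n) • ainv η • x := by
        rw [smul_smul (ind μ (A n)) (ind μ (A n)), ind_mul_self (hA.1 n)]
    _ = ind μ (A n) • w n := by rw [hpiece]

theorem HasRelCCP.mem_smul_add_of_tendsto (hU : HasRelCCP μ U) (hbal : IsL0Balanced μ U)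
    {x : E} {ζ : ℕ → L⁰} {ρ δ : L⁰} (hx : ∀ n, x ∈ ζ n • U) (hζ : ∀ n, 0 ≤ ζ n) (hρ : 0 ≤ ρ)
    (hlim : ∀ᵐ ω ∂μ, Tendsto (fun n => ζ n ω) atTop (𝓝 (ρ ω))) (hδ : δ ∈ Lspos μ) :
    x ∈ (ρ + δ) • U := by
  have hB : ∀ n, MeasurableSet {ω | ζ n ω ≤ (ρ + δ) ω} :=
    fun n => measurableSet_le (ζ n).measurable (ρ + δ).measurable
  have hcover : ∀ᵐ ω ∂μ, ∃ n, ω ∈ {ω | ζ n ω ≤ (ρ + δ) ω} := by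
    filter_upwards [hlim, hδ, AEEqFun.coeFn_add ρ δ] with ω hlim hδ c
    have hlt : ρ ω < (ρ + δ) ω := by rw [c, Pi.add_apply]; linarith
    exact (hlim.eventually (eventually_le_nhds hlt)).exists
  obtain ⟨A, hA, hAB⟩ := exists_isMeasPartition_ae_subset hB hcover
  refine hU.mem_smul_of_isMeasPartition hbal hA (add_mem_Lspos hρ hδ) hx fun n => ?_
  filter_upwards [hAB n, le_iff_ae_le.1 (hζ n), AEEqFun.coeFn_zero (μ := μ) (β := ℝ)]
    with ω hω h₀ c hωA
  rw [c, Pi.zero_apply] at h₀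
  rw [abs_of_nonneg h₀]
  exact hω hωA

end Absorption

variable (μ) in
/-- `p x` is the essential infimum of `{ξ ∈ L⁰₊₊ | x ∈ ξ • U}`: the L⁰-Minkowski functional
of `U`. -/
structure IsL0Gauge (U : Set E) (p : E → L⁰) : Prop where
  nonneg : ∀ x, 0 ≤ p x
  le_of_mem_smul : ∀ x, ∀ ξ ∈ Lspos μ, x ∈ ξ • U → p x ≤ ξ
  mem_smul_add : ∀ x, ∀ δ ∈ Lspos μ, x ∈ (p x + δ) • U

section Gauge

variable {U : Set E}

theorem exists_isL0Gauge [IsFiniteMeasure μ] (hconv : IsL0Convex μ U) (habs : IsL0Absorbent μ U)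
    (hbal : IsL0Balanced μ U) (hccp : HasRelCCP μ U) : ∃ p : E → L⁰, IsL0Gauge μ U p := by
  have h (x : E) : ∃ ρ : L⁰, 0 ≤ ρ ∧ (∀ ξ ∈ Lspos μ, x ∈ ξ • U → ρ ≤ ξ) ∧
      ∀ δ ∈ Lspos μ, x ∈ (ρ + δ) • U := by
    obtain ⟨ζ, ρ, hζS, hρ0, hρ, hlim⟩ := exists_seq_tendsto_essInf (μ := μ)
      (S := {ξ | ξ ∈ Lspos μ ∧ x ∈ ξ • U}) (habs x)
      (fun ξ hξ η hη => ⟨inf_mem_Lspos hξ.1 hη.1, hconv.mem_smul_inf hξ.2 hη.2⟩)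
      (fun ξ hξ => nonneg_of_mem_Lspos hξ.1)
    exact ⟨ρ, hρ0, fun ξ hξ hx => hρ ξ ⟨hξ, hx⟩, fun δ hδ => hccp.mem_smul_add_of_tendsto hbal
      (fun n => (hζS n).2) (fun n => nonneg_of_mem_Lspos (hζS n).1) hρ0 hlim hδ⟩
  choose p hp using h
  exact ⟨p, ⟨fun x => (hp x).1, fun x => (hp x).2.1, fun x => (hp x).2.2⟩⟩

namespace IsL0Gauge

variable {p : E → Ω →ₘ[μ] ℝ}

theorem isL0Seminorm (hp : IsL0Gauge μ U p) (hconv : IsL0Convex μ U) (hbal : IsL0Balanced μ U) :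
    IsL0Seminorm μ p := by
  refine .of_smul_le hp.nonneg (fun x y => ?_) (fun ξ x => ?_)
  · refine le_of_forall_le_add_mul (c := 2) fun δ hδ => ?_
    have hx := add_mem_Lspos (hp.nonneg x) hδ
    have hy := add_mem_Lspos (hp.nonneg y) hδ
    have h := hp.le_of_mem_smul _ _ (add_mem_Lspos (nonneg_of_mem_Lspos hx) hy)
      (hconv.add_mem_smul hx hy (hp.mem_smul_add x δ hδ) (hp.mem_smul_add y δ hδ))
    convert h using 1
    ring
  · refine le_of_forall_le_add_mul (c := aabs ξ + 1) fun δ hδ => ?_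
    set ζ := aabs ξ * p x + (aabs ξ + 1) * δ
    have hζ : ∀ᵐ ω ∂μ, ζ ω = |ξ ω| * p x ω + (|ξ ω| + 1) * δ ω ∧
        |(ξ * (p x + δ)) ω| ≤ ζ ω ∧ 0 < ζ ω := by
      filter_upwards [hδ, le_iff_ae_le.1 (hp.nonneg x),
        AEEqFun.coeFn_add (aabs ξ * p x) ((aabs ξ + 1) * δ), AEEqFun.coeFn_mul (aabs ξ) (p x),
        AEEqFun.coeFn_mul (aabs ξ + 1) δ, AEEqFun.coeFn_add (aabs ξ) 1, coeFn_aabs ξ,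
        AEEqFun.coeFn_mul ξ (p x + δ), AEEqFun.coeFn_add (p x) δ,
        AEEqFun.coeFn_one (μ := μ) (β := ℝ), AEEqFun.coeFn_zero (μ := μ) (β := ℝ)]
        with ω hδ hnn c₁ c₂ c₃ c₄ c₅ c₆ c₇ c₈ c₉
      rw [c₉, Pi.zero_apply] at hnn
      have hζω : ζ ω = |ξ ω| * p x ω + (|ξ ω| + 1) * δ ω := by
        rw [c₁, Pi.add_apply, c₂, c₃, Pi.mul_apply, Pi.mul_apply, c₄, Pi.add_apply, c₅, c₈,
          Pi.one_apply]
      rw [hζω, c₆, Pi.mul_apply, c₇, Pi.add_apply, abs_mul, abs_of_nonneg (add_nonneg hnn hδ.le)]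
      exact ⟨rfl, by nlinarith [abs_nonneg (ξ ω)], by positivity⟩
    have hζpos : ζ ∈ Lspos μ := hζ.mono fun _ h => h.2.2
    have hmem : ξ • x ∈ (ξ * (p x + δ)) • U := by
      obtain ⟨u, hu, hxu⟩ := Set.mem_smul_set.1 (hp.mem_smul_add x δ hδ)
      exact Set.mem_smul_set.2 ⟨u, hu, by rw [← smul_smul, hxu]⟩
    refine hp.le_of_mem_smul _ _ hζpos (hbal.mem_smul_of_aabs_le hmem hζpos ?_)
    rw [le_iff_ae_le]
    filter_upwards [hζ, coeFn_aabs (ξ * (p x + δ))] with ω h c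
    exact c ▸ h.2.1

theorem mem_of_le_half (hp : IsL0Gauge μ U p) (hbal : IsL0Balanced μ U) {x : E}
    (hx : p x ≤ AEEqFun.const Ω (1 / 2)) : x ∈ U := by
  have h := hbal.mem_smul_of_aabs_le (hp.mem_smul_add x _ (const_mem_Lspos one_half_pos))
    one_mem_Lspos ?_
  · rwa [one_smul] at h
  rw [le_iff_ae_le]
  filter_upwards [le_iff_ae_le.1 hx, le_iff_ae_le.1 (hp.nonneg x),
    coeFn_aabs (p x + AEEqFun.const Ω (1 / 2)), AEEqFun.coeFn_add (p x) (AEEqFun.const Ω (1 / 2)),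
    AEEqFun.coeFn_const (μ := μ) Ω (1 / 2 : ℝ), AEEqFun.coeFn_one (μ := μ) (β := ℝ),
    AEEqFun.coeFn_zero (μ := μ) (β := ℝ)] with ω hx hnn c₁ c₂ c₃ c₄ c₅
  rw [c₃, Function.const_apply] at hx
  rw [c₅, Pi.zero_apply] at hnn
  rw [c₁, c₂, Pi.add_apply, c₃, Function.const_apply, c₄, Pi.one_apply, abs_le]
  constructor <;> linarith

end IsL0Gauge

end Gauge

end PaperL0

theorem statement18_general
    {Ω : Type*} [MeasurableSpace Ω] (P : Measure Ω) [IsProbabilityMeasure P]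
    {E : Type*} [AddCommGroup E] [Module (Ω →ₘ[P] ℝ) E]
    (T : TopologicalSpace E)
    (Tc : TopologicalSpace (Ω →ₘ[P] ℝ))
    (haddcont : Continuous[@instTopologicalSpaceProd E E T T, T]
      (fun p : E × E => p.1 + p.2))
    (hsmulcont : Continuous[@instTopologicalSpaceProd (Ω →ₘ[P] ℝ) E Tc T, T]
      (fun p : (Ω →ₘ[P] ℝ) × E => p.1 • p.2)) :
    (∃ Ps : Set (E → Ω →ₘ[P] ℝ), (∀ p ∈ Ps, IsL0Seminorm P p) ∧
        ∀ V : Set E, IsOpen[T] V ↔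
          ∀ y ∈ V, ∃ Qs : Set (E → Ω →ₘ[P] ℝ), Qs.Finite ∧ Qs ⊆ Ps ∧
            ∃ ε ∈ Lspos P, ∀ u : E, (∀ q ∈ Qs, q u ≤ ε) → y + u ∈ V) ↔
      (∃ 𝒰 : Set (Set E), (@nhds E T 0).HasBasis (· ∈ 𝒰) id ∧
        ∀ U ∈ 𝒰, IsL0Convex P U ∧ IsL0Absorbent P U ∧ IsL0Balanced P U ∧ HasRelCCP P U) := by
  have : ContinuousAdd E := ⟨haddcont⟩
  have : ContinuousSMul (Ω →ₘ[P] ℝ) E := ⟨hsmulcont⟩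
  constructor
  · rintro ⟨Ps, hPs, hT⟩
    refine ⟨seminormBalls Ps, hasBasis_nhds_zero_seminormBalls hPs hT, ?_⟩
    rintro _ ⟨Qs, hfin, hQs, ε, hε, rfl⟩
    have hQs' : ∀ q ∈ Qs, IsL0Seminorm P q := fun q hq => hPs q (hQs hq)
    exact ⟨isL0Convex_seminormBall hQs', isL0Absorbent_seminormBall hQs' hfin hε,
      isL0Balanced_seminormBall hQs', hasRelCCP_seminormBall hQs'⟩
  · rintro ⟨𝒰, h𝒰, hU⟩
    refine ⟨{q | ∃ U ∈ 𝒰, IsL0Gauge P U q}, ?_, isInducedBySeminorms_of_forall ?_ ?_⟩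
    · rintro q ⟨U, hU𝒰, hq⟩
      exact hq.isL0Seminorm (hU U hU𝒰).1 (hU U hU𝒰).2.2.1
    · rintro q ⟨U, hU𝒰, hq⟩ ε hε
      exact mem_of_superset (smul_mem_nhds_zero (h𝒰.mem_of_mem hU𝒰) hε)
        fun x hx => hq.le_of_mem_smul x ε hε hx
    · intro N hN
      obtain ⟨U, hU𝒰, hUN⟩ := h𝒰.mem_iff.1 hN
      obtain ⟨hconv, habs, hbal, hccp⟩ := hU U hU𝒰
      obtain ⟨q, hq⟩ := exists_isL0Gauge hconv habs hbal hccp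
      exact ⟨q, ⟨U, hU𝒰, hq⟩, _, const_mem_Lspos one_half_pos,
        fun x hx => hUN (hq.mem_of_le_half hbal hx)⟩

/-- Theorem 3.10: for a topological L⁰-module (E, 𝒯), the topology 𝒯 is induced by some
family of L⁰-seminorms iff there is a neighborhood base 𝒰 of 0 consisting of L⁰-convex,
L⁰-absorbent, L⁰-balanced sets with the relative countable concatenation property. -/
theorem statement18
    {Ω : Type*} [MeasurableSpace Ω] (P : Measure Ω) [IsProbabilityMeasure P]
    {E : Type*} [AddCommGroup E] [Module (Ω →ₘ[P] ℝ) E]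
    (T : TopologicalSpace E)
    (Tc : TopologicalSpace (Ω →ₘ[P] ℝ))
    (hTc : ∀ W : Set (Ω →ₘ[P] ℝ),
      IsOpen[Tc] W ↔ ∀ ξ ∈ W, ∃ ε ∈ Lspos P, ∀ η ∈ ball P ε, ξ + η ∈ W)
    (haddcont : Continuous[@instTopologicalSpaceProd E E T T, T]
      (fun p : E × E => p.1 + p.2))
    (hsmulcont : Continuous[@instTopologicalSpaceProd (Ω →ₘ[P] ℝ) E Tc T, T]
      (fun p : (Ω →ₘ[P] ℝ) × E => p.1 • p.2)) :
    (∃ Ps : Set (E → Ω →ₘ[P] ℝ), (∀ p ∈ Ps, IsL0Seminorm P p) ∧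
        ∀ V : Set E, IsOpen[T] V ↔
          ∀ y ∈ V, ∃ Qs : Set (E → Ω →ₘ[P] ℝ), Qs.Finite ∧ Qs ⊆ Ps ∧
            ∃ ε ∈ Lspos P, ∀ u : E, (∀ q ∈ Qs, q u ≤ ε) → y + u ∈ V) ↔
      (∃ 𝒰 : Set (Set E), (@nhds E T 0).HasBasis (· ∈ 𝒰) id ∧
        ∀ U ∈ 𝒰, IsL0Convex P U ∧ IsL0Absorbent P U ∧ IsL0Balanced P U ∧ HasRelCCP P U) :=
  statement18_general P T Tc haddcont hsmulcont
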